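/- arXiv:1001.3252 — 5 statements merged into one kernel-verified Lean document; each statement's English description precedes it below -/
import Mathlib

section
/- Let n ≥ 2 be an integer, σ > 0, r_- > 0, and i ≠ j indices in {1,…,n}. Let 𝐱 ∈ (ℝ³×ℝ)^n satisfy σx̌_i ≥ r_-, σx̌_j ≥ r_-, and |x_i−x_j| = σ(x̌_i+x̌_j), and set 𝐱^{es} = 𝐱 − r_-√(2+2σ²)·𝐧_{ij}(𝐱). Then for every 𝐳 ∈ (ℝ³×ℝ)^n one has |(x^{es}_i+z_i) − (x^{es}_j+z_j)| − σ(x̌^{es}_i + ž_i + x̌^{es}_j + ž_j) ≤ √(2+2σ²)·‖𝐳‖ − 2r_-(1+σ²). -/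
open scoped RealInnerProductSpace

noncomputable section

/-- A globule: a point of `ℝ³ × ℝ` with the Euclidean (L²) norm;
the first component is the center, the second the radius. -/
abbrev Glob : Type := WithLp 2 (EuclideanSpace ℝ (Fin 3) × ℝ)

/-- The configuration space of `n` globules, `(ℝ³ × ℝ)ⁿ` with the Euclidean norm. -/
abbrev Conf (n : ℕ) : Type := PiLp 2 (fun _ : Fin n => Glob)

/-- The center of the `i`-th globule. -/
def ctr {n : ℕ} (x : Conf n) (i : Fin n) : EuclideanSpace ℝ (Fin 3) :=
  (WithLp.equiv 2 (EuclideanSpace ℝ (Fin 3) × ℝ) (x i)).1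

/-- The radius of the `i`-th globule. -/
def rad {n : ℕ} (x : Conf n) (i : Fin n) : ℝ :=
  (WithLp.equiv 2 (EuclideanSpace ℝ (Fin 3) × ℝ) (x i)).2

/-- The vector `𝐰` at a configuration `x`: its `i`-th center component is
`(x_i - x_j)/(σ(x̌_i + x̌_j))`, its `j`-th center component is the opposite,
its radius components at `i` and `j` are `-σ`, all other components vanish. -/
def wvec (σ : ℝ) {n : ℕ} (i j : Fin n) (x : Conf n) : Conf n := WithLp.toLp 2 fun k =>
  (WithLp.equiv 2 (EuclideanSpace ℝ (Fin 3) × ℝ)).symm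
    (if k = i then (σ * (rad x i + rad x j))⁻¹ • (ctr x i - ctr x j)
      else if k = j then (σ * (rad x i + rad x j))⁻¹ • (ctr x j - ctr x i)
      else 0,
     if k = i ∨ k = j then -σ else 0)

/-- The inward normal vector `𝐧_{ij}(x) = 𝐰/√(2+2σ²)`. -/
def nvec (σ : ℝ) {n : ℕ} (i j : Fin n) (x : Conf n) : Conf n :=
  (Real.sqrt (2 + 2 * σ ^ 2))⁻¹ • wvec σ i j x

/-- The set `𝒟_{ij} = {𝐱 : |x_i - x_j| ≥ σ(x̌_i + x̌_j)}`. -/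
def Dset (σ : ℝ) {n : ℕ} (i j : Fin n) : Set (Conf n) :=
  {x | σ * (rad x i + rad x j) ≤ ‖ctr x i - ctr x j‖}

/-- The set `𝒜_g^σ` of allowed (rescaled) configurations. -/
def AgSet (σ rm rp : ℝ) (n : ℕ) : Set (Conf n) :=
  {x | (∀ i, rm / σ ≤ rad x i ∧ rad x i ≤ rp / σ) ∧
    ∀ i j : Fin n, i ≠ j → σ * (rad x i + rad x j) ≤ ‖ctr x i - ctr x j‖}

/-- The function `f(𝐱) = |x_i - x_j| - σ(x̌_i + x̌_j)`. -/
def fij (σ : ℝ) {n : ℕ} (i j : Fin n) (x : Conf n) : ℝ :=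
  ‖ctr x i - ctr x j‖ - σ * (rad x i + rad x j)

end

/-!
Moving `𝐱` by `r_-` along `-𝐰` shrinks `|x_i - x_j|` by `2r_-` and enlarges both radii by
`r_- σ`, so `f(𝐱) = |x_i - x_j| - σ(x̌_i + x̌_j)` drops from `0` to `-2r_-(1 + σ²)`. The function `f`
is subadditive by the triangle inequality, and `f(𝐳) ≤ √(2+2σ²)‖𝐳‖` by Cauchy–Schwarz against
the vector `(1, 1, -σ, -σ)`.
-/

section Coordinates

variable {n : ℕ}

@[simp] lemma ctr_add (x y : Conf n) (k : Fin n) : ctr (x + y) k = ctr x k + ctr y k := rfl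
@[simp] lemma rad_add (x y : Conf n) (k : Fin n) : rad (x + y) k = rad x k + rad y k := rfl
@[simp] lemma ctr_sub (x y : Conf n) (k : Fin n) : ctr (x - y) k = ctr x k - ctr y k := rfl
@[simp] lemma rad_sub (x y : Conf n) (k : Fin n) : rad (x - y) k = rad x k - rad y k := rfl
@[simp] lemma ctr_smul (c : ℝ) (x : Conf n) (k : Fin n) : ctr (c • x) k = c • ctr x k := rfl
@[simp] lemma rad_smul (c : ℝ) (x : Conf n) (k : Fin n) : rad (c • x) k = c * rad x k := rfl

lemma norm_ctr_sq_add_rad_sq (x : Conf n) (k : Fin n) :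
    ‖ctr x k‖ ^ 2 + rad x k ^ 2 = ‖x k‖ ^ 2 := by
  rw [WithLp.prod_norm_sq_eq_of_L2]
  simp [ctr, rad, sq_abs]

variable (σ : ℝ) {i j : Fin n} (x : Conf n)

lemma ctr_wvec_left :
    ctr (wvec σ i j x) i = (σ * (rad x i + rad x j))⁻¹ • (ctr x i - ctr x j) := by
  simp [ctr, wvec]

lemma ctr_wvec_right (hij : i ≠ j) :
    ctr (wvec σ i j x) j = (σ * (rad x i + rad x j))⁻¹ • (ctr x j - ctr x i) := by
  simp [ctr, wvec, hij.symm]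

lemma rad_wvec_left : rad (wvec σ i j x) i = -σ := by
  simp [rad, wvec]

lemma rad_wvec_right : rad (wvec σ i j x) j = -σ := by
  simp [rad, wvec]

lemma mul_sqrt_smul_nvec (c : ℝ) :
    (c * Real.sqrt (2 + 2 * σ ^ 2)) • nvec σ i j x = c • wvec σ i j x := by
  have hS : Real.sqrt (2 + 2 * σ ^ 2) ≠ 0 := by positivity
  rw [nvec, smul_smul, mul_assoc, mul_inv_cancel₀ hS, mul_one]

end Coordinates

lemma PiLp.norm_sq_add_norm_sq_le {ι : Type*} [Fintype ι] {β : ι → Type*}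
    [∀ k, SeminormedAddCommGroup (β k)] (z : PiLp 2 β) {i j : ι} (hij : i ≠ j) :
    ‖z i‖ ^ 2 + ‖z j‖ ^ 2 ≤ ‖z‖ ^ 2 := by
  rw [PiLp.norm_sq_eq_of_L2]
  exact Finset.add_le_sum (f := fun k => ‖z k‖ ^ 2) (fun k _ => by positivity)
    (Finset.mem_univ i) (Finset.mem_univ j) hij

lemma add_sub_mul_add_sq_le (σ a b c d : ℝ) :
    (a + b - σ * (c + d)) ^ 2 ≤ (2 + 2 * σ ^ 2) * (a ^ 2 + c ^ 2 + (b ^ 2 + d ^ 2)) := by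
  nlinarith [sq_nonneg (a - b), sq_nonneg (c + σ * a), sq_nonneg (d + σ * a),
    sq_nonneg (c + σ * b), sq_nonneg (d + σ * b), sq_nonneg (σ * (c - d))]

section Fij

variable (σ : ℝ) {n : ℕ} (i j : Fin n)

lemma fij_add_le (x z : Conf n) : fij σ i j (x + z) ≤ fij σ i j x + fij σ i j z := by
  have h := norm_add_le (ctr x i - ctr x j) (ctr z i - ctr z j)
  simp only [fij, ctr_add, rad_add]
  rw [add_sub_add_comm]
  linarith

variable {i j}

lemma fij_le_sqrt_mul_norm (hij : i ≠ j) (z : Conf n) :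
    fij σ i j z ≤ Real.sqrt (2 + 2 * σ ^ 2) * ‖z‖ := by
  set S := Real.sqrt (2 + 2 * σ ^ 2)
  have hS : S ^ 2 = 2 + 2 * σ ^ 2 := Real.sq_sqrt (by positivity)
  have hsplit : ‖ctr z i‖ ^ 2 + rad z i ^ 2 + (‖ctr z j‖ ^ 2 + rad z j ^ 2) ≤ ‖z‖ ^ 2 := by
    rw [norm_ctr_sq_add_rad_sq, norm_ctr_sq_add_rad_sq]
    exact PiLp.norm_sq_add_norm_sq_le z hij
  have hsq : (‖ctr z i‖ + ‖ctr z j‖ - σ * (rad z i + rad z j)) ^ 2 ≤ (S * ‖z‖) ^ 2 := by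
    rw [mul_pow, hS]
    exact (add_sub_mul_add_sq_le σ _ _ _ _).trans (by gcongr)
  have hcs := le_of_sq_le_sq hsq (by positivity)
  have htri := norm_sub_le (ctr z i) (ctr z j)
  unfold fij
  linarith

lemma fij_sub_smul_wvec (hij : i ≠ j) (x : Conf n)
    (hc : ‖ctr x i - ctr x j‖ = σ * (rad x i + rad x j)) {r : ℝ} (hr : 0 < r)
    (h2r : 2 * r ≤ σ * (rad x i + rad x j)) :
    fij σ i j (x - r • wvec σ i j x) = -2 * r * (1 + σ ^ 2) := by
  set t := σ * (rad x i + rad x j)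
  have ht : 0 < t := by linarith
  have hdiff : ctr (x - r • wvec σ i j x) i - ctr (x - r • wvec σ i j x) j =
      (1 - 2 * r / t) • (ctr x i - ctr x j) := by
    simp only [ctr_sub, ctr_smul, ctr_wvec_left, ctr_wvec_right σ x hij]
    module
  have hcoef : 0 ≤ 1 - 2 * r / t := by
    rw [sub_nonneg, div_le_one ht]
    exact h2r
  have hnorm : ‖ctr (x - r • wvec σ i j x) i - ctr (x - r • wvec σ i j x) j‖ = t - 2 * r := by
    rw [hdiff, norm_smul, Real.norm_of_nonneg hcoef, hc]
    field_simp
  rw [fij, hnorm]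
  simp only [rad_sub, rad_smul, rad_wvec_left, rad_wvec_right, t]
  ring

end Fij

theorem statement1_general (n : ℕ) (σ : ℝ) (rm : ℝ) (hrm : 0 < rm)
    (i j : Fin n) (hij : i ≠ j) (x : Conf n)
    (hxi : rm ≤ σ * rad x i) (hxj : rm ≤ σ * rad x j)
    (hc : ‖ctr x i - ctr x j‖ = σ * (rad x i + rad x j)) :
    ∀ z : Conf n,
      ‖(ctr (x - (rm * Real.sqrt (2 + 2 * σ ^ 2)) • nvec σ i j x) i + ctr z i) -
          (ctr (x - (rm * Real.sqrt (2 + 2 * σ ^ 2)) • nvec σ i j x) j + ctr z j)‖ -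
        σ * (rad (x - (rm * Real.sqrt (2 + 2 * σ ^ 2)) • nvec σ i j x) i + rad z i +
             rad (x - (rm * Real.sqrt (2 + 2 * σ ^ 2)) • nvec σ i j x) j + rad z j) ≤
      Real.sqrt (2 + 2 * σ ^ 2) * ‖z‖ - 2 * rm * (1 + σ ^ 2) := by
  intro z
  rw [mul_sqrt_smul_nvec]
  set xes := x - rm • wvec σ i j x
  have h2rm : 2 * rm ≤ σ * (rad x i + rad x j) := by linarith
  calc _ = fij σ i j (xes + z) := by simp only [fij, ctr_add, rad_add]; ring
    _ ≤ fij σ i j xes + fij σ i j z := fij_add_le σ i j xes z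
    _ ≤ -2 * rm * (1 + σ ^ 2) + Real.sqrt (2 + 2 * σ ^ 2) * ‖z‖ :=
        add_le_add (fij_sub_smul_wvec σ hij x hc hrm h2rm).le (fij_le_sqrt_mul_norm σ hij z)
    _ = _ := by ring

theorem statement1 (n : ℕ) (hn : 2 ≤ n) (σ : ℝ) (hσ : 0 < σ) (rm : ℝ) (hrm : 0 < rm)
    (i j : Fin n) (hij : i ≠ j) (x : Conf n)
    (hxi : rm ≤ σ * rad x i) (hxj : rm ≤ σ * rad x j)
    (hc : ‖ctr x i - ctr x j‖ = σ * (rad x i + rad x j)) :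
    ∀ z : Conf n,
      ‖(ctr (x - (rm * Real.sqrt (2 + 2 * σ ^ 2)) • nvec σ i j x) i + ctr z i) -
          (ctr (x - (rm * Real.sqrt (2 + 2 * σ ^ 2)) • nvec σ i j x) j + ctr z j)‖ -
        σ * (rad (x - (rm * Real.sqrt (2 + 2 * σ ^ 2)) • nvec σ i j x) i + rad z i +
             rad (x - (rm * Real.sqrt (2 + 2 * σ ^ 2)) • nvec σ i j x) j + rad z j) ≤
      Real.sqrt (2 + 2 * σ ^ 2) * ‖z‖ - 2 * rm * (1 + σ ^ 2) :=
  statement1_general n σ rm hrm i j hij x hxi hxj hc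
end

section
/- Let E be a real inner product space and let a, b ∈ E be nonzero vectors with ‖a − b‖ ≤ ‖a‖. Then ⟨a/‖a‖, b/‖b‖⟩ ≥ (‖a‖ − ‖a−b‖)/(‖a‖ + ‖a−b‖) ≥ 1 − 2‖a−b‖/‖a‖. -/
open scoped RealInnerProductSpace

/-!
By the law of cosines, with `r = ‖a‖`, `s = ‖b‖`, `d = ‖a - b‖` the inner product of the unit
vectors is `(r² + s² - d²) / (2rs)`. Multiplied by `(r + d)`, the gap between this and
`(r - d) / (r + d)` becomes a quadratic in `s` that is a square plus `(r - d)` times a nonnegative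
cubic, hence nonnegative when `d ≤ r`.
-/

theorem sub_div_add_le_sq_add_sq_sub_sq_div {r s d : ℝ} (hr : 0 < r) (hs : 0 < s) (hd : 0 ≤ d) (hdr : d ≤ r) :
    (r - d) / (r + d) ≤ (r ^ 2 + s ^ 2 - d ^ 2) / (2 * r * s) := by
  rw [div_le_div_iff₀ (by positivity) (by positivity)]
  have key : (r + d) * ((r ^ 2 + s ^ 2 - d ^ 2) * (r + d) - (r - d) * (2 * r * s)) =
      ((r + d) * s - r * (r - d)) ^ 2 + (r - d) * (4 * r ^ 2 * d + 3 * r * d ^ 2 + d ^ 3) := by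
    ring
  have hpos : 0 ≤ (r + d) * ((r ^ 2 + s ^ 2 - d ^ 2) * (r + d) - (r - d) * (2 * r * s)) := by
    rw [key]
    have := sub_nonneg.2 hdr
    positivity
  exact sub_nonneg.1 ((mul_nonneg_iff_of_pos_left (by positivity)).1 hpos)

theorem one_sub_two_mul_div_le_sub_div_add {r d : ℝ} (hr : 0 < r) (hd : 0 ≤ d) :
    1 - 2 * d / r ≤ (r - d) / (r + d) := by
  rw [one_sub_div hr.ne', div_le_div_iff₀ hr (by positivity)]
  nlinarith [sq_nonneg d]

theorem inner_normalize_eq {E : Type*} [NormedAddCommGroup E] [InnerProductSpace ℝ E] (a b : E) :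
    ⟪‖a‖⁻¹ • a, ‖b‖⁻¹ • b⟫ = (‖a‖ ^ 2 + ‖b‖ ^ 2 - ‖a - b‖ ^ 2) / (2 * ‖a‖ * ‖b‖) := by
  rw [real_inner_smul_left, real_inner_smul_right, norm_sub_sq_real]
  ring

theorem statement4 {E : Type*} [NormedAddCommGroup E] [InnerProductSpace ℝ E]
    (a b : E) (ha : a ≠ 0) (hb : b ≠ 0) (h : ‖a - b‖ ≤ ‖a‖) :
    ⟪‖a‖⁻¹ • a, ‖b‖⁻¹ • b⟫ ≥ (‖a‖ - ‖a - b‖) / (‖a‖ + ‖a - b‖) ∧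
    (‖a‖ - ‖a - b‖) / (‖a‖ + ‖a - b‖) ≥ 1 - 2 * ‖a - b‖ / ‖a‖ := by
  have hA : 0 < ‖a‖ := norm_pos_iff.mpr ha
  refine ⟨?_, one_sub_two_mul_div_le_sub_div_add hA (norm_nonneg _)⟩
  rw [inner_normalize_eq]
  exact sub_div_add_le_sq_add_sq_sub_sq_div hA (norm_pos_iff.mpr hb) (norm_nonneg _) h
end

section
/- Let n ≥ 2 be an integer, σ > 0, 0 < r_- < r_+, and i ≠ j indices in {1,…,n}. For all 𝐱, 𝐲 ∈ 𝒜_g^σ with |x_i−x_j| = σ(x̌_i+x̌_j) and |y_i−y_j| = σ(y̌_i+y̌_j), one has ⟨𝐧_{ij}(𝐱), 𝐧_{ij}(𝐲)⟩ ≥ 1 − (√2 / (r_-(1+σ²))) · ‖𝐱 − 𝐲‖. -/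
open scoped RealInnerProductSpace

/-! At a contact configuration the centre part of `𝐰(𝐱)` is the unit vector
`â = normalize (x_i - x_j)`, so `⟪𝐧(𝐱), 𝐧(𝐲)⟫ = 1 - (1 - ⟪â, b̂⟫) / (1 + σ²)`.
Then `1 - ⟪â, b̂⟫ ≤ ‖â - b̂‖ ≤ 2 ‖a - b‖ / ‖a‖`, where `‖a‖ = σ (x̌_i + x̌_j) ≥ 2 r_-`, and
`‖a - b‖ ≤ √2 ‖𝐱 - 𝐲‖` since `a - b` only involves the `i`-th and `j`-th centres of `𝐱 - 𝐲`. -/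

open NormedSpace

section Normalize

variable {V : Type*} [NormedAddCommGroup V] [NormedSpace ℝ V]

theorem NormedSpace.norm_normalize_le_one (b : V) : ‖normalize b‖ ≤ 1 := by
  by_cases hb : b = 0
  · simp [hb]
  · exact (norm_normalize_eq_one_iff.2 hb).le

theorem NormedSpace.norm_normalize_sub_normalize_le {a : V} (ha : a ≠ 0) (b : V) :
    ‖normalize a - normalize b‖ ≤ 2 * ‖a - b‖ / ‖a‖ := by
  have ha' : 0 < ‖a‖ := norm_pos_iff.2 ha
  -- write `b = ‖b‖ • normalize b` and split off the change of length
  have hsplit : normalize a - normalize b =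
      ‖a‖⁻¹ • (a - b) + (‖a‖⁻¹ * (‖b‖ - ‖a‖)) • normalize b := by
    rw [mul_sub, inv_mul_cancel₀ ha'.ne', sub_smul, one_smul, mul_smul, norm_smul_normalize,
      normalize, smul_sub]
    abel
  have hlen : ‖(‖a‖⁻¹ * (‖b‖ - ‖a‖)) • normalize b‖ ≤ ‖a - b‖ / ‖a‖ := by
    rw [norm_smul, norm_mul, norm_inv, norm_norm, Real.norm_eq_abs, abs_sub_comm,
      inv_mul_eq_div, div_mul_eq_mul_div]
    gcongr
    calc |‖a‖ - ‖b‖| * ‖normalize b‖ ≤ |‖a‖ - ‖b‖| * 1 := by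
          gcongr; exact norm_normalize_le_one b
      _ ≤ ‖a - b‖ := by rw [mul_one]; exact abs_norm_sub_norm_le a b
  calc ‖normalize a - normalize b‖
      ≤ ‖‖a‖⁻¹ • (a - b)‖ + ‖(‖a‖⁻¹ * (‖b‖ - ‖a‖)) • normalize b‖ :=
        hsplit ▸ norm_add_le _ _
    _ ≤ ‖a - b‖ / ‖a‖ + ‖a - b‖ / ‖a‖ := by
        rw [norm_smul, norm_inv, norm_norm, inv_mul_eq_div]; gcongr
    _ = 2 * ‖a - b‖ / ‖a‖ := by ring

end Normalize

section InnerProduct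

variable {E : Type*} [NormedAddCommGroup E] [InnerProductSpace ℝ E]

theorem one_sub_inner_le_norm_sub {u : E} (hu : ‖u‖ = 1) (v : E) :
    1 - ⟪u, v⟫ ≤ ‖u - v‖ := by
  have h := real_inner_le_norm u (u - v)
  rwa [inner_sub_right, real_inner_self_eq_norm_sq, hu, one_pow, one_mul] at h

theorem one_sub_inner_normalize_le {a : E} (ha : a ≠ 0) (b : E) :
    1 - ⟪normalize a, normalize b⟫ ≤ 2 * ‖a - b‖ / ‖a‖ :=
  (one_sub_inner_le_norm_sub (norm_normalize_eq_one_iff.2 ha) _).trans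
    (norm_normalize_sub_normalize_le ha b)

end InnerProduct

theorem PiLp.norm_apply_sub_apply_le {ι E : Type*} [Fintype ι] [SeminormedAddCommGroup E]
    (f : PiLp 2 fun _ : ι => E) {i j : ι} (hij : i ≠ j) :
    ‖f i - f j‖ ≤ Real.sqrt 2 * ‖f‖ := by
  classical
  have hpair : ‖f i‖ ^ 2 + ‖f j‖ ^ 2 ≤ ‖f‖ ^ 2 := by
    rw [PiLp.norm_sq_eq_of_L2, ← Finset.sum_pair hij (f := fun k => ‖f k‖ ^ 2)]
    exact Finset.sum_le_sum_of_subset_of_nonneg (Finset.subset_univ _) fun _ _ _ => by positivity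
  rw [← Real.sqrt_sq (norm_nonneg f), ← Real.sqrt_mul zero_le_two]
  refine (norm_sub_le _ _).trans (Real.le_sqrt_of_sq_le ?_)
  nlinarith [sq_nonneg (‖f i‖ - ‖f j‖)]

section Configuration

variable {n : ℕ}

theorem norm_ctr_sub_ctr_le (z : Conf n) {i j : Fin n} (hij : i ≠ j) :
    ‖ctr z i - ctr z j‖ ≤ Real.sqrt 2 * ‖z‖ :=
  (WithLp.norm_fst_le _ (z i - z j)).trans (PiLp.norm_apply_sub_apply_le z hij)

theorem two_mul_le_norm_ctr_sub_of_contact {σ rm rp : ℝ} (hσ : 0 < σ) {x : Conf n}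
    (hx : x ∈ AgSet σ rm rp n) {i j : Fin n}
    (hcx : ‖ctr x i - ctr x j‖ = σ * (rad x i + rad x j)) :
    2 * rm ≤ ‖ctr x i - ctr x j‖ := by
  have hi := (div_le_iff₀' hσ).1 (hx.1 i).1
  have hj := (div_le_iff₀' hσ).1 (hx.1 j).1
  rw [hcx]
  linarith

theorem inner_wvec (σ : ℝ) {i j : Fin n} (hij : i ≠ j) (x y : Conf n) :
    ⟪wvec σ i j x, wvec σ i j y⟫ =
      2 * ⟪(σ * (rad x i + rad x j))⁻¹ • (ctr x i - ctr x j),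
           (σ * (rad y i + rad y j))⁻¹ • (ctr y i - ctr y j)⟫ + 2 * σ ^ 2 := by
  classical
  have hsupp : ∀ k ∉ ({i, j} : Finset (Fin n)),
      ⟪(wvec σ i j x) k, (wvec σ i j y) k⟫ = 0 := by
    intro k hk
    simp only [Finset.mem_insert, Finset.mem_singleton, not_or] at hk
    simp [wvec, hk.1, hk.2]
  rw [PiLp.inner_apply, ← Finset.sum_subset (Finset.subset_univ _) fun k _ hk => hsupp k hk,
    Finset.sum_pair hij]
  simp only [wvec, WithLp.equiv_symm_apply, ↓reduceIte, hij, hij.symm, or_false, or_true,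
    WithLp.prod_inner_apply, inner_self_eq_norm_sq_to_K, norm_neg, Real.norm_eq_abs,
    Real.ringHom_apply, sq_abs]
  rw [← neg_sub (ctr x i), ← neg_sub (ctr y i), smul_neg, smul_neg, inner_neg_neg]
  ring

theorem inner_nvec_of_contact (σ : ℝ) {i j : Fin n} (hij : i ≠ j) {x y : Conf n}
    (hcx : ‖ctr x i - ctr x j‖ = σ * (rad x i + rad x j))
    (hcy : ‖ctr y i - ctr y j‖ = σ * (rad y i + rad y j)) :
    ⟪nvec σ i j x, nvec σ i j y⟫ =
      1 - (1 - ⟪normalize (ctr x i - ctr x j), normalize (ctr y i - ctr y j)⟫) / (1 + σ ^ 2) := by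
  have hpos : (0 : ℝ) < 2 + 2 * σ ^ 2 := by positivity
  rw [nvec, nvec, real_inner_smul_left, real_inner_smul_right, inner_wvec σ hij, ← hcx, ← hcy,
    ← inv_mul_eq_div, ← mul_assoc, ← mul_inv, Real.mul_self_sqrt hpos.le]
  simp only [NormedSpace.normalize]
  field_simp
  ring

end Configuration

theorem statement6_general (n : ℕ) (σ : ℝ) (hσ : 0 < σ) (rm rp : ℝ)
    (hrm : 0 < rm) (i j : Fin n) (hij : i ≠ j)
    (x y : Conf n) (hx : x ∈ AgSet σ rm rp n)
    (hcx : ‖ctr x i - ctr x j‖ = σ * (rad x i + rad x j))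
    (hcy : ‖ctr y i - ctr y j‖ = σ * (rad y i + rad y j)) :
    ⟪nvec σ i j x, nvec σ i j y⟫ ≥
      1 - Real.sqrt 2 / (rm * (1 + σ ^ 2)) * ‖x - y‖ := by
  set a := ctr x i - ctr x j
  set b := ctr y i - ctr y j
  have ha : 2 * rm ≤ ‖a‖ := two_mul_le_norm_ctr_sub_of_contact hσ hx hcx
  have ha0 : a ≠ 0 := norm_pos_iff.1 (by linarith)
  have hab : ‖a - b‖ ≤ Real.sqrt 2 * ‖x - y‖ :=
    calc ‖a - b‖ = ‖ctr (x - y) i - ctr (x - y) j‖ := by rw [sub_sub_sub_comm]; rfl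
      _ ≤ Real.sqrt 2 * ‖x - y‖ := norm_ctr_sub_ctr_le (x - y) hij
  have hkey : 1 - ⟪normalize a, normalize b⟫ ≤ Real.sqrt 2 * ‖x - y‖ / rm :=
    calc 1 - ⟪normalize a, normalize b⟫ ≤ 2 * ‖a - b‖ / ‖a‖ := one_sub_inner_normalize_le ha0 b
      _ ≤ 2 * ‖a - b‖ / (2 * rm) := by gcongr
      _ = ‖a - b‖ / rm := by field_simp
      _ ≤ Real.sqrt 2 * ‖x - y‖ / rm := by gcongr
  rw [inner_nvec_of_contact σ hij hcx hcy, ge_iff_le, sub_le_sub_iff_left]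
  calc (1 - ⟪normalize a, normalize b⟫) / (1 + σ ^ 2)
      ≤ Real.sqrt 2 * ‖x - y‖ / rm / (1 + σ ^ 2) := by gcongr
    _ = Real.sqrt 2 / (rm * (1 + σ ^ 2)) * ‖x - y‖ := by rw [div_div]; ring

theorem statement6 (n : ℕ) (hn : 2 ≤ n) (σ : ℝ) (hσ : 0 < σ) (rm rp : ℝ)
    (hrm : 0 < rm) (hrmp : rm < rp) (i j : Fin n) (hij : i ≠ j)
    (x y : Conf n) (hx : x ∈ AgSet σ rm rp n) (hy : y ∈ AgSet σ rm rp n)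
    (hcx : ‖ctr x i - ctr x j‖ = σ * (rad x i + rad x j))
    (hcy : ‖ctr y i - ctr y j‖ = σ * (rad y i + rad y j)) :
    ⟪nvec σ i j x, nvec σ i j y⟫ ≥
      1 - Real.sqrt 2 / (rm * (1 + σ ^ 2)) * ‖x - y‖ :=
  statement6_general n σ hσ rm rp hrm i j hij x y hx hcx hcy
end

section
/- Let M ≥ 2 be an integer, 0 < r_- < r_+, and 0 < ε ≤ 1. Then for every measurable function g : ℝ³×ℝ → [0,∞], ∫_{(ℝ³×ℝ)^M} g(x_1, x̌_1) · Π_{i=1}^{M} 1_{[r_-,r_+]}(x̌_i) · Π_{i=2}^{M} 1_{{ x̌_{i−1}+x̌_i ≤ |x_i − x_{i−1}| ≤ x̌_{i−1}+x̌_i+ε }} dx_1 dx̌_1 ⋯ dx_M dx̌_M ≤ ( ∫_{ℝ³×[r_-,r_+]} g(x,x̌) dx dx̌ ) · ( 4π(2r_+ + 1)²(r_+ − r_-) ε )^{M−1}. -/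
/-!
Integrate the globules out one at a time, starting from the first. Once `x₁` is fixed, the
next globule has its radius in `[r₋, r₊]` and its center in a spherical shell around `x₁`
of inner radius `x̌₁ + x̌₂ ≤ 2r₊` and thickness `ε ≤ 1`, whose volume is at most
`4π(2r₊ + 1)²ε`; integrating over the radius contributes `r₊ - r₋`. Each of the `M - 1`
contacts therefore costs at most the factor `4π(2r₊ + 1)²(r₊ - r₋)ε`, and what is left in
the end is the integral of `g` over the first globule.
-/

open MeasureTheory
open scoped ENNReal

/-- A globule: a center in `ℝ³` and a radius in `ℝ`. -/
abbrev E3R : Type := EuclideanSpace ℝ (Fin 3) × ℝ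

/-- The index `i - 1` in `Fin M` (equal to `i` itself when `i = 0`). -/
def prev {M : ℕ} (i : Fin M) : Fin M :=
  ⟨i.val - 1, Nat.lt_of_le_of_lt (Nat.sub_le _ _) i.isLt⟩

open Set Real

section Chain

variable {α : Type*} [MeasurableSpace α] {μ : Measure α} [SigmaFinite μ]

theorem lintegral_pi_fin_succ {m : ℕ} {f : (Fin (m + 1) → α) → ℝ≥0∞} (hf : Measurable f) :
    ∫⁻ x, f x ∂Measure.pi (fun _ => μ) =
      ∫⁻ x₀, ∫⁻ x, f (Fin.cons x₀ x) ∂Measure.pi (fun _ => μ) ∂μ := by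
  let e := MeasurableEquiv.piFinSuccAbove (fun _ : Fin (m + 1) => α) 0
  rw [← (measurePreserving_piFinSuccAbove (fun _ => μ) 0).symm.lintegral_comp hf,
    lintegral_prod (fun p => f (e.symm p)) (hf.comp e.symm.measurable).aemeasurable]
  simp only [e, MeasurableEquiv.piFinSuccAbove_symm_apply, Fin.insertNthEquiv_zero]
  rfl

theorem measurable_indicator_uncurry {S : Set α} (hS : MeasurableSet S) {K : α → α → ℝ≥0∞}
    (hK : Measurable (Function.uncurry K)) :
    Measurable fun p : α × α => S.indicator (K p.1) p.2 := by
  classical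
  simp only [indicator_apply]
  exact Measurable.ite (measurable_snd hS) hK measurable_const

theorem measurable_indicator_chain {S : Set α} (hS : MeasurableSet S) {K : α → α → ℝ≥0∞}
    (hK : Measurable (Function.uncurry K)) (m : ℕ) {h : α → ℝ≥0∞} (hh : Measurable h) :
    Measurable fun x : Fin (m + 1) → α =>
      S.indicator h (x 0) * ∏ i : Fin m, S.indicator (K (x i.castSucc)) (x i.succ) :=
  ((hh.indicator hS).comp (measurable_pi_apply 0)).mul <|
    Finset.measurable_prod _ fun i _ => (measurable_indicator_uncurry hS hK).comp
      (f := fun x : Fin (m + 1) → α => (x i.castSucc, x i.succ))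
      ((measurable_pi_apply _).prodMk (measurable_pi_apply _))

theorem lintegral_indicator_chain_le {S : Set α} (hS : MeasurableSet S) {K : α → α → ℝ≥0∞}
    (hK : Measurable (Function.uncurry K)) {C : ℝ≥0∞} (hKC : ∀ y ∈ S, ∫⁻ x in S, K y x ∂μ ≤ C)
    (m : ℕ) {h : α → ℝ≥0∞} (hh : Measurable h) :
    ∫⁻ x, S.indicator h (x 0) * ∏ i : Fin m, S.indicator (K (x i.castSucc)) (x i.succ)
        ∂Measure.pi (fun _ => μ) ≤ (∫⁻ y in S, h y ∂μ) * C ^ m := by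
  induction m generalizing h with
  | zero =>
    simp only [Finset.univ_eq_empty, Finset.prod_empty, mul_one, pow_zero]
    rw [← lintegral_indicator hS]
    exact ((measurePreserving_funUnique μ (Fin 1)).lintegral_comp (hh.indicator hS)).le
  | succ m ih =>
    -- once `x₀` is fixed, the rest is a chain of length `m` whose initial weight is `K x₀`
    have hK' : ∀ y, Measurable (K y) := fun y => hK.comp measurable_prodMk_left
    calc _ = ∫⁻ x₀, S.indicator h x₀ * ∫⁻ x, S.indicator (K x₀) (x 0) *
            ∏ i : Fin m, S.indicator (K (x i.castSucc)) (x i.succ) ∂Measure.pi (fun _ => μ) ∂μ := by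
          rw [lintegral_pi_fin_succ (measurable_indicator_chain hS hK _ hh)]
          refine lintegral_congr fun x₀ => ?_
          rw [← lintegral_const_mul _ (measurable_indicator_chain hS hK _ (hK' x₀))]
          simp only [Fin.cons_zero, Fin.cons_succ, Fin.prod_univ_succ, Fin.castSucc_zero,
            Fin.castSucc_succ]
      _ ≤ ∫⁻ x₀, S.indicator h x₀ * ((∫⁻ y in S, K x₀ y ∂μ) * C ^ m) ∂μ :=
          lintegral_mono fun x₀ => mul_le_mul_right (ih (hK' x₀)) _
      _ ≤ ∫⁻ x₀, S.indicator h x₀ * C ^ (m + 1) ∂μ := by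
          refine lintegral_mono fun x₀ => ?_
          by_cases hx₀ : x₀ ∈ S
          · rw [pow_succ']
            gcongr
            exact hKC x₀ hx₀
          · simp [hx₀]
      _ = (∫⁻ y in S, h y ∂μ) * C ^ (m + 1) := by
          rw [lintegral_mul_const _ (hh.indicator hS), lintegral_indicator hS]

end Chain

theorem volume_sphericalShell_le (c : EuclideanSpace ℝ (Fin 3)) {R ε : ℝ} (hR : 0 ≤ R)
    (hε : 0 ≤ ε) :
    volume {x | ‖x - c‖ ∈ Icc R (R + ε)} ≤ ENNReal.ofReal (4 * π * (R + ε) ^ 2 * ε) := by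
  have hshell : {x | ‖x - c‖ ∈ Icc R (R + ε)} = Metric.closedBall c (R + ε) \ Metric.ball c R := by
    ext x; simp [dist_eq_norm, and_comm]
  have hcube : (R + ε) ^ 3 - R ^ 3 ≤ 3 * (R + ε) ^ 2 * ε := by
    nlinarith [mul_nonneg (mul_nonneg hR hε) hε, pow_nonneg hε 3]
  rw [hshell, measure_sdiff (Metric.ball_subset_closedBall.trans
      (Metric.closedBall_subset_closedBall (by linarith))) measurableSet_ball.nullMeasurableSet
      measure_ball_lt_top.ne, EuclideanSpace.volume_closedBall_fin_three,
    EuclideanSpace.volume_ball_fin_three, ← ENNReal.sub_mul fun _ _ => ENNReal.ofReal_ne_top,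
    ← ENNReal.ofReal_pow hR, ← ENNReal.ofReal_pow (by linarith),
    ← ENNReal.ofReal_sub _ (by positivity),
    ← ENNReal.ofReal_mul (sub_nonneg.2 (pow_le_pow_left₀ hR (by linarith) 3))]
  exact ENNReal.ofReal_le_ofReal (by nlinarith [pi_pos])

noncomputable def contactIndicator (ε : ℝ) (y x : E3R) : ℝ≥0∞ :=
  if ‖x.1 - y.1‖ ∈ Icc (y.2 + x.2) (y.2 + x.2 + ε) then 1 else 0

theorem measurable_contactIndicator (ε : ℝ) :
    Measurable (Function.uncurry (contactIndicator ε)) := by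
  have hdist : Measurable fun p : E3R × E3R => ‖p.2.1 - p.1.1‖ := by fun_prop
  have hsum : Measurable fun p : E3R × E3R => p.1.2 + p.2.2 := by fun_prop
  refine Measurable.ite ?_ measurable_const measurable_const
  exact (measurableSet_le hsum hdist).inter (measurableSet_le hdist (hsum.add_const ε))

theorem lintegral_contactIndicator_radius_eq (ε t : ℝ) (y : E3R) :
    ∫⁻ c, contactIndicator ε y (c, t) =
      volume {c | ‖c - y.1‖ ∈ Icc (y.2 + t) (y.2 + t + ε)} := by
  rw [← lintegral_indicator_one]
  · simp only [contactIndicator, indicator_apply, mem_ofPred_eq, Pi.one_apply]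
  · exact measurableSet_Icc.preimage (by fun_prop)

theorem setLIntegral_contactIndicator_le {rm rp ε : ℝ} (hrm : 0 ≤ rm) (hε0 : 0 ≤ ε) (hε1 : ε ≤ 1)
    {y : E3R} (hy : y.2 ∈ Icc rm rp) :
    ∫⁻ x in univ ×ˢ Icc rm rp, contactIndicator ε y x ≤
      ENNReal.ofReal (4 * π * (2 * rp + 1) ^ 2 * (rp - rm) * ε) := by
  have hshell : ∀ t ∈ Icc rm rp, ∫⁻ c, contactIndicator ε y (c, t) ≤
      ENNReal.ofReal (4 * π * (2 * rp + 1) ^ 2 * ε) := fun t ht => by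
    rw [lintegral_contactIndicator_radius_eq]
    refine (volume_sphericalShell_le y.1 (by linarith [hy.1, ht.1]) hε0).trans ?_
    gcongr
    · linarith [hy.1, ht.1]
    · linarith [hy.2, ht.2]
  rw [Measure.volume_eq_prod, setLIntegral_prod_symm _
      (measurable_contactIndicator ε).of_uncurry_left.aemeasurable, Measure.restrict_univ]
  calc _ ≤ ∫⁻ _ in Icc rm rp, ENNReal.ofReal (4 * π * (2 * rp + 1) ^ 2 * ε) :=
        setLIntegral_mono measurable_const hshell
    _ = _ := by
        rw [setLIntegral_const, Real.volume_Icc, ← ENNReal.ofReal_mul (by positivity)]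
        ring_nf

theorem indicator_univ_prod_Icc_apply (rm rp : ℝ) (f : E3R → ℝ≥0∞) (y : E3R) :
    (univ ×ˢ Icc rm rp).indicator f y = (if y.2 ∈ Icc rm rp then 1 else 0) * f y := by
  simp [indicator_apply]

theorem chain_integrand_eq (rm rp ε : ℝ) (g : E3R → ℝ≥0∞) {m : ℕ} (x : Fin (m + 1) → E3R) :
    g (x 0) * (∏ i, if (x i).2 ∈ Icc rm rp then (1 : ℝ≥0∞) else 0) *
        (∏ i : Fin (m + 1), if (i : ℕ) = 0 then 1 else contactIndicator ε (x (prev i)) (x i)) =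
      (univ ×ˢ Icc rm rp).indicator g (x 0) * ∏ i : Fin m,
        (univ ×ˢ Icc rm rp).indicator (contactIndicator ε (x i.castSucc)) (x i.succ) := by
  have hprev : ∀ i : Fin m, prev i.succ = i.castSucc := fun i => Fin.ext (by simp [prev])
  simp only [indicator_univ_prod_Icc_apply, Fin.prod_univ_succ, Fin.val_zero, Fin.val_succ,
    hprev, if_true, Nat.succ_ne_zero, if_false, Finset.prod_mul_distrib]
  ring

/-- the chain integral estimate. Lebesgue measure on `(ℝ³×ℝ)^M` is the
product `volume`; the integrand is `g(x_0,x̌_0)` times the indicators that all radii lie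
in `[r_-,r_+]` and that consecutive globules form an `ε`-chain of contacts. -/
theorem statement10 (M : ℕ) (hM : 2 ≤ M) (rm rp : ℝ) (hrm : 0 < rm)
    (ε : ℝ) (hε0 : 0 < ε) (hε1 : ε ≤ 1)
    (g : E3R → ℝ≥0∞) (hg : Measurable g) :
    (∫⁻ x : Fin M → E3R,
        g (x ⟨0, by omega⟩) *
        (∏ i : Fin M, if (x i).2 ∈ Set.Icc rm rp then (1 : ℝ≥0∞) else 0) *
        (∏ i : Fin M, if (i : ℕ) = 0 then (1 : ℝ≥0∞) else
          (if ‖(x i).1 - (x (prev i)).1‖ ∈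
              Set.Icc ((x (prev i)).2 + (x i).2) ((x (prev i)).2 + (x i).2 + ε)
            then 1 else 0))) ≤
      (∫⁻ y in (Set.univ ×ˢ Set.Icc rm rp : Set E3R), g y) *
        ENNReal.ofReal (4 * Real.pi * (2 * rp + 1) ^ 2 * (rp - rm) * ε) ^ (M - 1) := by
  obtain ⟨m, rfl⟩ : ∃ m, M = m + 1 := ⟨M - 1, by omega⟩
  rw [Nat.add_sub_cancel]
  calc _ = ∫⁻ x : Fin (m + 1) → E3R, (univ ×ˢ Icc rm rp).indicator g (x 0) * ∏ i : Fin m,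
          (univ ×ˢ Icc rm rp).indicator (contactIndicator ε (x i.castSucc)) (x i.succ) :=
        lintegral_congr fun x => chain_integrand_eq rm rp ε g x
    _ ≤ _ := lintegral_indicator_chain_le (MeasurableSet.univ.prod measurableSet_Icc)
        (measurable_contactIndicator ε)
        (fun y hy => setLIntegral_contactIndicator_le hrm.le hε0.le hε1 (Set.mem_prod.1 hy).2) m hg
end

section
/- Let M ≥ 2 and n ≥ M be integers, 0 < r_- < r_+, 0 < ε ≤ 1, and let ψ : ℝ³×ℝ → [0,∞] be measurable. Then ν_n(⛓^M_n(ε)) ≤ (n!/(n−M)!) · ν_{n−M}((ℝ³×ℝ)^{n−M}) · ( ∫_{ℝ³×[r_-,r_+]} e^{−ψ(x,x̌)} dx dx̌ ) · ( 4π(2r_+ + 1)²(r_+ − r_-) ε )^{M−1}. -/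
open MeasureTheory
open scoped ENNReal

noncomputable section

/-- `expNeg a = e^{-a}` for `a ∈ [0,∞]`, with `e^{-∞} = 0`. -/
def expNeg (a : ℝ≥0∞) : ℝ≥0∞ :=
  if a = ∞ then 0 else ENNReal.ofReal (Real.exp (-a.toReal))

/-- The set of allowed configurations of `n` globules: all radii in `[r_-,r_+]`
and no two globules overlap. -/
def AgN (rm rp : ℝ) (n : ℕ) : Set (Fin n → E3R) :=
  {x | (∀ i, (x i).2 ∈ Set.Icc rm rp) ∧
    ∀ i j : Fin n, i ≠ j → (x i).2 + (x j).2 ≤ ‖(x i).1 - (x j).1‖}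

/-- The configurations of `n` globules containing an `ε`-chain of `M` globules:
there are distinct indices `i₁,…,i_M` with consecutive globules `ε`-close. -/
def chainSet (M n : ℕ) (ε : ℝ) : Set (Fin n → E3R) :=
  {x | ∃ f : Fin M → Fin n, Function.Injective f ∧
    ∀ k : Fin M, (k : ℕ) ≠ 0 →
      ‖(x (f k)).1 - (x (f (prev k))).1‖ < (x (f k)).2 + (x (f (prev k))).2 + ε}

/-- The measure `ν_n(A) = ∫_A exp(-∑ᵢ ψ(xᵢ,x̌ᵢ)) 1_{𝒜_g}(𝐱) d𝐱` on `(ℝ³×ℝ)ⁿ`. -/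
def nu (ψ : E3R → ℝ≥0∞) (rm rp : ℝ) (n : ℕ) (A : Set (Fin n → E3R)) : ℝ≥0∞ :=
  ∫⁻ x in A, (∏ i : Fin n, expNeg (ψ (x i))) * (AgN rm rp n).indicator (fun _ => 1) x

end

/-!
Every `ε`-chain of `M` globules is an `ε`-chain along some injection `Fin M ↪ Fin n`, and there
are `n! / (n - M)!` of those. For a fixed injection, drop the weights `e^{-ψ}` of all chain
globules but the first and split the configuration into the chain and the other `n - M` globules,
which still form an allowed configuration. The chain is then integrated out globule by globule
from its end: a globule that does not overlap its predecessor but lies within `ε` of it has its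
center in a spherical shell of radius at most `2 r₊ + ε ≤ 2 r₊ + 1` and thickness `ε`, so it
ranges over a set of volume at most `4π (2 r₊ + 1)² (r₊ - r₋) ε`.
-/

open Set

section RelChain

variable {α : Type*} {S : Set α} {R : α → α → Prop}

def relChain (S : Set α) (R : α → α → Prop) (m : ℕ) : Set (Fin (m + 1) → α) :=
  {x | (∀ k, x k ∈ S) ∧ ∀ k : Fin m, R (x k.castSucc) (x k.succ)}

theorem snoc_mem_relChain_iff {m : ℕ} {x : Fin (m + 1) → α} {a : α} :
    Fin.snoc x a ∈ relChain S R (m + 1) ↔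
      x ∈ relChain S R m ∧ a ∈ S ∧ R (x (Fin.last m)) a := by
  simp only [relChain, mem_ofPred_eq, Fin.forall_fin_succ' (n := m + 1),
    Fin.forall_fin_succ' (n := m), Fin.snoc_castSucc, Fin.snoc_last, Fin.succ_castSucc,
    Fin.succ_last]
  tauto

section Measurable

variable [MeasurableSpace α]

theorem measurableSet_relChain (hS : MeasurableSet S)
    (hR : MeasurableSet {p : α × α | R p.1 p.2}) (m : ℕ) :
    MeasurableSet (relChain S R m) := by
  simp only [relChain, ofPred_and, ofPred_forall]
  exact (MeasurableSet.iInter fun k => measurable_pi_apply k hS).inter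
    (MeasurableSet.iInter fun k =>
      hR.preimage (f := fun x : Fin (m + 1) → α => (x k.castSucc, x k.succ)) (by fun_prop))

theorem measurableSet_mem_and_rel (hS : MeasurableSet S)
    (hR : MeasurableSet {p : α × α | R p.1 p.2}) (a : α) :
    MeasurableSet {b | b ∈ S ∧ R a b} :=
  hS.inter (hR.preimage (f := fun b => (a, b)) (by fun_prop))

end Measurable

theorem indicator_relChain_snoc (w : α → ℝ≥0∞) {m : ℕ} (x : Fin (m + 1) → α) (a : α) :
    (relChain S R (m + 1)).indicator (fun y => w (y 0)) (Fin.snoc x a) =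
      (relChain S R m).indicator (fun y => w (y 0)) x *
        {b | b ∈ S ∧ R (x (Fin.last m)) b}.indicator 1 a := by
  by_cases hx : x ∈ relChain S R m <;> by_cases ha : a ∈ S ∧ R (x (Fin.last m)) a <;>
    simp [hx, ha, snoc_mem_relChain_iff, Fin.snoc_apply_zero]

variable [MeasureSpace α] [SigmaFinite (volume : Measure α)]

theorem lintegral_eq_lintegral_lintegral_snoc {m : ℕ} {g : (Fin (m + 2) → α) → ℝ≥0∞}
    (hg : Measurable g) : ∫⁻ x, g x = ∫⁻ x, ∫⁻ a, g (Fin.snoc x a) := by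
  let T := MeasurableEquiv.piFinSuccAbove (fun _ : Fin (m + 2) => α) (Fin.last (m + 1))
  have hT : ∀ a x, T.symm (a, x) = Fin.snoc x a := by
    simp [T, MeasurableEquiv.piFinSuccAbove_symm_apply, Fin.insertNthEquiv, Fin.insertNth_last']
  rw [← (volume_preserving_piFinSuccAbove (fun _ => α) (Fin.last (m + 1))).symm.lintegral_comp hg,
    Measure.volume_eq_prod,
    lintegral_prod_symm (fun p => g (T.symm p)) (hg.comp T.symm.measurable).aemeasurable]
  simp_rw [hT]

theorem lintegral_indicator_relChain_le (hS : MeasurableSet S)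
    (hR : MeasurableSet {p : α × α | R p.1 p.2}) {w : α → ℝ≥0∞} (hw : Measurable w)
    {V : ℝ≥0∞} (hV : ∀ a ∈ S, volume {b | b ∈ S ∧ R a b} ≤ V) (m : ℕ) :
    ∫⁻ x, (relChain S R m).indicator (fun x => w (x 0)) x ≤ (∫⁻ a in S, w a) * V ^ m := by
  induction m with
  | zero =>
    have h : relChain S R 0 = MeasurableEquiv.funUnique (Fin 1) α ⁻¹' S := by
      ext x
      simp [relChain, Fin.forall_fin_one]
    rw [h, pow_zero, mul_one, ← lintegral_indicator hS,
      ← (volume_preserving_funUnique (Fin 1) α).lintegral_comp (hw.indicator hS)]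
    exact le_of_eq (lintegral_congr fun x => indicator_comp_right (g := w) _)
  | succ m ih =>
    set I := fun j => (relChain S R j).indicator (fun x : Fin (j + 1) → α => w (x 0))
    have hI : ∀ j, Measurable (I j) := fun j =>
      (hw.comp (measurable_pi_apply 0)).indicator (measurableSet_relChain hS hR j)
    have hlast : ∀ x : Fin (m + 1) → α,
        I m x * volume {b | b ∈ S ∧ R (x (Fin.last m)) b} ≤ I m x * V := by
      intro x
      by_cases hx : x ∈ relChain S R m
      · exact mul_le_mul_right (hV _ (hx.1 _)) _
      · simp [I, hx]
    calc ∫⁻ x, I (m + 1) x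
        = ∫⁻ x, I m x * volume {b | b ∈ S ∧ R (x (Fin.last m)) b} := by
          refine (lintegral_eq_lintegral_lintegral_snoc (hI _)).trans (lintegral_congr fun x => ?_)
          have hmeas := measurableSet_mem_and_rel hS hR (x (Fin.last m))
          simp_rw [I, indicator_relChain_snoc]
          rw [lintegral_const_mul _ (measurable_one.indicator hmeas), lintegral_indicator_one hmeas]
      _ ≤ ∫⁻ x, I m x * V := lintegral_mono hlast
      _ ≤ (∫⁻ a in S, w a) * V ^ (m + 1) := by
          rw [lintegral_mul_const _ (hI m), pow_succ, ← mul_assoc]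
          exact mul_le_mul_left ih _

end RelChain

section SumEquiv

variable {α : Type*} [MeasureSpace α] [SigmaFinite (volume : Measure α)]

theorem setLIntegral_le_lintegral_mul_lintegral_of_sumEquiv {ι ι' κ : Type*} [Fintype ι]
    [Fintype ι'] [Fintype κ] (e : ι ⊕ ι' ≃ κ) {F : (ι → α) → ℝ≥0∞} {G : (ι' → α) → ℝ≥0∞}
    (hF : Measurable F) (hG : Measurable G) {s : Set (κ → α)} {H : (κ → α) → ℝ≥0∞}
    (hH : ∀ x ∈ s, H x ≤ F (fun i => x (e (.inl i))) * G (fun j => x (e (.inr j)))) :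
    ∫⁻ x in s, H x ≤ (∫⁻ y, F y) * ∫⁻ z, G z := by
  set K : (κ → α) → ℝ≥0∞ := fun x => F (fun i => x (e (.inl i))) * G (fun j => x (e (.inr j)))
  have hK : Measurable K := by fun_prop
  calc ∫⁻ x in s, H x ≤ ∫⁻ x in s, K x := setLIntegral_mono hK hH
    _ ≤ ∫⁻ x, K x := setLIntegral_le_lintegral _ _
    _ = ∫⁻ w, K (MeasurableEquiv.piCongrLeft (fun _ => α) e w) :=
        ((volume_measurePreserving_piCongrLeft (fun _ => α) e).lintegral_comp hK).symm
    _ = ∫⁻ p : (ι → α) × (ι' → α), F p.1 * G p.2 := by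
        refine ((volume_measurePreserving_sumPiEquivProdPi_symm (fun _ : ι ⊕ ι' => α)).lintegral_comp
          (hK.comp (MeasurableEquiv.piCongrLeft _ e).measurable)).symm.trans
          (lintegral_congr fun p => ?_)
        simp [K, MeasurableEquiv.piCongrLeft_apply_apply, MeasurableEquiv.coe_sumPiEquivProdPi_symm]
    _ = (∫⁻ y, F y) * ∫⁻ z, G z := by
        rw [Measure.volume_eq_prod, lintegral_prod_mul hF.aemeasurable hG.aemeasurable]

end SumEquiv

theorem Function.Embedding.exists_sumEquiv_extend {ι ι' κ : Type*} [Fintype ι] [Fintype ι']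
    [Fintype κ] (f : ι ↪ κ) (h : Fintype.card ι' = Fintype.card κ - Fintype.card ι) :
    ∃ e : ι ⊕ ι' ≃ κ, ∀ i, e (.inl i) = f i := by
  classical
  have e' : ι' ≃ ↥(range f)ᶜ := Fintype.equivOfCardEq <| by
    rw [h, Fintype.card_compl_set, Set.card_range_of_injective f.injective]
  exact ⟨(Equiv.sumCongr (Equiv.ofInjective f f.injective) e').trans (Equiv.Set.sumCompl _),
    fun i => by simp⟩

theorem Fintype.prod_le_apply_mul_prod_inr {ι ι' κ N : Type*} [Fintype ι] [Fintype ι']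
    [Fintype κ] [CommMonoid N] [PartialOrder N] [IsOrderedMonoid N] (e : ι ⊕ ι' ≃ κ) (u : κ → N)
    (hu : ∀ k, u k ≤ 1) (i : ι) :
    ∏ k, u k ≤ u (e (.inl i)) * ∏ j, u (e (.inr j)) := by
  classical
  rw [← e.prod_comp, Fintype.prod_sum_type]
  gcongr
  simpa using Finset.prod_le_prod_of_subset_of_le_one' (Finset.subset_univ {i})
    (fun k _ _ => hu (e (.inl k)))

theorem ENNReal.natCast_descFactorial {n k : ℕ} (h : k ≤ n) :
    (n.descFactorial k : ℝ≥0∞) = n.factorial / (n - k).factorial := by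
  rw [ENNReal.eq_div_iff (by exact_mod_cast (Nat.factorial_pos _).ne') (ENNReal.natCast_ne_top _)]
  exact_mod_cast Nat.factorial_mul_descFactorial h

theorem measurable_expNeg : Measurable expNeg :=
  Measurable.ite measurableSet_eq measurable_const
    (ENNReal.measurable_ofReal.comp (Real.measurable_exp.comp ENNReal.measurable_toReal.neg))

theorem expNeg_le_one (a : ℝ≥0∞) : expNeg a ≤ 1 := by
  unfold expNeg
  split
  · exact zero_le_one
  · simp [Real.exp_le_one_iff.mpr (neg_nonpos.mpr ENNReal.toReal_nonneg)]

theorem EuclideanSpace.volume_ball_diff_ball_le (a : EuclideanSpace ℝ (Fin 3)) {s δ : ℝ}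
    (hs : 0 ≤ s) (hδ : 0 ≤ δ) :
    volume (Metric.ball a (s + δ) \ Metric.ball a s) ≤
      ENNReal.ofReal (4 * Real.pi * (s + δ) ^ 2 * δ) := by
  rw [measure_sdiff (Metric.ball_subset_ball (by linarith)) measurableSet_ball.nullMeasurableSet
      measure_ball_lt_top.ne, EuclideanSpace.volume_ball_fin_three,
    EuclideanSpace.volume_ball_fin_three, ← ENNReal.sub_mul (fun _ _ => ENNReal.ofReal_ne_top),
    ← ENNReal.ofReal_pow (by linarith), ← ENNReal.ofReal_pow hs,
    ← ENNReal.ofReal_sub _ (pow_nonneg hs 3),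
    ← ENNReal.ofReal_mul (sub_nonneg.2 (pow_le_pow_left₀ hs (by linarith) 3))]
  refine ENNReal.ofReal_le_ofReal ?_
  have hcube : (s + δ) ^ 3 - s ^ 3 ≤ 3 * (s + δ) ^ 2 * δ := by
    nlinarith [mul_nonneg (mul_nonneg hs hδ) hδ, pow_nonneg hδ 3]
  calc ((s + δ) ^ 3 - s ^ 3) * (Real.pi * 4 / 3)
      ≤ 3 * (s + δ) ^ 2 * δ * (Real.pi * 4 / 3) := by gcongr
    _ = 4 * Real.pi * (s + δ) ^ 2 * δ := by ring

def ChainLink (ε : ℝ) (a b : E3R) : Prop :=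
  b.2 + a.2 ≤ ‖b.1 - a.1‖ ∧ ‖b.1 - a.1‖ < b.2 + a.2 + ε

theorem measurableSet_chainLink (ε : ℝ) :
    MeasurableSet {p : E3R × E3R | ChainLink ε p.1 p.2} :=
  (measurableSet_le (f := fun p : E3R × E3R => p.2.2 + p.1.2) (g := fun p => ‖p.2.1 - p.1.1‖)
    (by fun_prop) (by fun_prop)).inter
  (measurableSet_lt (f := fun p : E3R × E3R => ‖p.2.1 - p.1.1‖)
    (g := fun p => p.2.2 + p.1.2 + ε) (by fun_prop) (by fun_prop))

theorem volume_chainLink_le {rm rp ε : ℝ} (hrm : 0 ≤ rm) (hε0 : 0 ≤ ε) (hε1 : ε ≤ 1) {a : E3R}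
    (ha : a ∈ (univ ×ˢ Icc rm rp : Set E3R)) :
    volume {b | b ∈ (univ ×ˢ Icc rm rp : Set E3R) ∧ ChainLink ε a b} ≤
      ENNReal.ofReal (4 * Real.pi * (2 * rp + 1) ^ 2 * (rp - rm) * ε) := by
  set L := {b | b ∈ (univ ×ˢ Icc rm rp : Set E3R) ∧ ChainLink ε a b}
  obtain ⟨-, ha_lo, ha_hi⟩ := ha
  have hslice : ∀ ρ, volume ((fun c => (c, ρ)) ⁻¹' L) ≤
      (Icc rm rp).indicator (fun _ => ENNReal.ofReal (4 * Real.pi * (2 * rp + 1) ^ 2 * ε)) ρ := by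
    intro ρ
    by_cases hρ : ρ ∈ Icc rm rp
    · have hsub : (fun c => (c, ρ)) ⁻¹' L ⊆
          Metric.ball a.1 (ρ + a.2 + ε) \ Metric.ball a.1 (ρ + a.2) := fun c hc => by
        simpa [L, ChainLink, dist_eq_norm] using hc.2.symm
      rw [indicator_of_mem hρ]
      refine (measure_mono hsub).trans ((EuclideanSpace.volume_ball_diff_ball_le _
        (by linarith [hρ.1]) hε0).trans (ENNReal.ofReal_le_ofReal ?_))
      gcongr
      · linarith [hρ.1]
      · linarith [hρ.2]
    · have hempty : (fun c => (c, ρ)) ⁻¹' L = ∅ := by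
        ext c
        simpa [L] using fun h1 h2 => absurd ⟨h1, h2⟩ hρ
      simp [hempty]
  rw [Measure.volume_eq_prod, Measure.prod_apply_symm
    (measurableSet_mem_and_rel (MeasurableSet.univ.prod measurableSet_Icc)
      (measurableSet_chainLink ε) a)]
  refine (lintegral_mono hslice).trans_eq ?_
  rw [lintegral_indicator_const measurableSet_Icc, Real.volume_Icc,
    ← ENNReal.ofReal_mul (by positivity)]
  ring_nf

theorem measurableSet_AgN (rm rp : ℝ) (n : ℕ) : MeasurableSet (AgN rm rp n) := by
  simp only [AgN, ofPred_and, ofPred_forall]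
  exact (MeasurableSet.iInter fun i => (measurable_pi_apply i).snd measurableSet_Icc).inter
    (MeasurableSet.iInter fun i => MeasurableSet.iInter fun j => MeasurableSet.iInter fun _ =>
      measurableSet_le (by fun_prop) (by fun_prop))

theorem comp_mem_AgN {rm rp : ℝ} {k n : ℕ} {x : Fin n → E3R} (hx : x ∈ AgN rm rp n)
    (g : Fin k ↪ Fin n) : x ∘ g ∈ AgN rm rp k :=
  ⟨fun i => hx.1 (g i), fun i j hij => hx.2 (g i) (g j) (g.injective.ne hij)⟩

noncomputable def configDensity (ψ : E3R → ℝ≥0∞) (rm rp : ℝ) (n : ℕ) (x : Fin n → E3R) : ℝ≥0∞ :=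
  (∏ i : Fin n, expNeg (ψ (x i))) * (AgN rm rp n).indicator (fun _ => 1) x

theorem measurable_configDensity {ψ : E3R → ℝ≥0∞} (hψ : Measurable ψ) (rm rp : ℝ) (n : ℕ) :
    Measurable (configDensity ψ rm rp n) :=
  (Finset.measurable_prod _ fun i _ => measurable_expNeg.comp (hψ.comp (measurable_pi_apply i))).mul
    (measurable_const.indicator (measurableSet_AgN rm rp n))

def linkedAlong {m n : ℕ} (ε : ℝ) (f : Fin (m + 1) ↪ Fin n) : Set (Fin n → E3R) :=
  {x | ∀ k : Fin m,
    ‖(x (f k.succ)).1 - (x (f k.castSucc)).1‖ < (x (f k.succ)).2 + (x (f k.castSucc)).2 + ε}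

theorem chainSet_subset_iUnion_linkedAlong (m n : ℕ) (ε : ℝ) :
    chainSet (m + 1) n ε ⊆ ⋃ f : Fin (m + 1) ↪ Fin n, linkedAlong ε f := by
  rintro x ⟨f, hf, hlink⟩
  have hprev : ∀ k : Fin m, prev k.succ = k.castSucc := fun k => Fin.ext (by simp [prev])
  exact mem_iUnion.2 ⟨⟨f, hf⟩, fun k => by simpa [hprev] using hlink k.succ (by simp)⟩

theorem comp_mem_relChain {rm rp ε : ℝ} {m n : ℕ} {f : Fin (m + 1) ↪ Fin n} {x : Fin n → E3R}
    (hA : x ∈ AgN rm rp n) (hx : x ∈ linkedAlong ε f) :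
    x ∘ f ∈ relChain (univ ×ˢ Icc rm rp) (ChainLink ε) m :=
  ⟨fun k => ⟨trivial, hA.1 (f k)⟩,
    fun k => ⟨hA.2 _ _ (f.injective.ne (Fin.castSucc_lt_succ (i := k)).ne'), hx k⟩⟩

theorem configDensity_le_mul {ψ : E3R → ℝ≥0∞} {rm rp ε : ℝ} {m n n' : ℕ}
    {f : Fin (m + 1) ↪ Fin n} (e : Fin (m + 1) ⊕ Fin n' ≃ Fin n) (he : ∀ k, e (.inl k) = f k)
    {x : Fin n → E3R} (hx : x ∈ linkedAlong ε f) :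
    configDensity ψ rm rp n x ≤
      (relChain (univ ×ˢ Icc rm rp) (ChainLink ε) m).indicator (fun y => expNeg (ψ (y 0)))
          (fun k => x (e (.inl k))) *
        configDensity ψ rm rp n' (fun j => x (e (.inr j))) := by
  by_cases hA : x ∈ AgN rm rp n
  · have hchain := comp_mem_relChain hA hx
    have hrest : (fun j => x (e (.inr j))) ∈ AgN rm rp n' :=
      comp_mem_AgN hA (Function.Embedding.inr.trans e.toEmbedding)
    have hf : (fun k => x (e (.inl k))) = x ∘ f := funext fun k => by simp [he]
    rw [hf, indicator_of_mem hchain, configDensity, configDensity, indicator_of_mem hA,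
      indicator_of_mem hrest, mul_one, mul_one]
    simpa [he] using Fintype.prod_le_apply_mul_prod_inr e (fun i => expNeg (ψ (x i)))
      (fun i => expNeg_le_one _) 0
  · simp [configDensity, hA]

theorem setLIntegral_linkedAlong_le {ψ : E3R → ℝ≥0∞} (hψ : Measurable ψ) {rm rp ε : ℝ}
    (hrm : 0 ≤ rm) (hε0 : 0 ≤ ε) (hε1 : ε ≤ 1) {m n : ℕ} (f : Fin (m + 1) ↪ Fin n) :
    ∫⁻ x in linkedAlong ε f, configDensity ψ rm rp n x ≤
      (∫⁻ y in (univ ×ˢ Icc rm rp : Set E3R), expNeg (ψ y)) *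
        ENNReal.ofReal (4 * Real.pi * (2 * rp + 1) ^ 2 * (rp - rm) * ε) ^ m *
        nu ψ rm rp (n - (m + 1)) univ := by
  have hS : MeasurableSet (univ ×ˢ Icc rm rp : Set E3R) := MeasurableSet.univ.prod measurableSet_Icc
  obtain ⟨e, he⟩ := f.exists_sumEquiv_extend (ι' := Fin (n - (m + 1))) (by simp)
  refine (setLIntegral_le_lintegral_mul_lintegral_of_sumEquiv e
    ((measurable_expNeg.comp (hψ.comp (measurable_pi_apply 0))).indicator
      (measurableSet_relChain hS (measurableSet_chainLink ε) m))
    (measurable_configDensity hψ rm rp _) fun x hx => configDensity_le_mul e he hx).trans ?_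
  rw [nu, Measure.restrict_univ]
  exact mul_le_mul_left (lintegral_indicator_relChain_le hS (measurableSet_chainLink ε)
    (measurable_expNeg.comp hψ) (fun a ha => volume_chainLink_le hrm hε0 hε1 ha) m) _

theorem statement11_general (M n : ℕ) (hM : 2 ≤ M) (hn : M ≤ n) (rm rp : ℝ)
    (hrm : 0 < rm) (ε : ℝ) (hε0 : 0 < ε) (hε1 : ε ≤ 1)
    (ψ : E3R → ℝ≥0∞) (hψ : Measurable ψ) :
    nu ψ rm rp n (chainSet M n ε) ≤
      ((n.factorial : ℝ≥0∞) / ((n - M).factorial : ℝ≥0∞)) *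
        nu ψ rm rp (n - M) Set.univ *
        (∫⁻ y in (Set.univ ×ˢ Set.Icc rm rp : Set E3R), expNeg (ψ y)) *
        ENNReal.ofReal (4 * Real.pi * (2 * rp + 1) ^ 2 * (rp - rm) * ε) ^ (M - 1) := by
  obtain ⟨m, rfl⟩ : ∃ m, M = m + 1 := ⟨M - 1, by omega⟩
  calc nu ψ rm rp n (chainSet (m + 1) n ε)
      ≤ ∫⁻ x in ⋃ f : Fin (m + 1) ↪ Fin n, linkedAlong ε f, configDensity ψ rm rp n x :=
        lintegral_mono_set (chainSet_subset_iUnion_linkedAlong m n ε)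
    _ ≤ ∑ f : Fin (m + 1) ↪ Fin n, ∫⁻ x in linkedAlong ε f, configDensity ψ rm rp n x :=
        (lintegral_iUnion_le _ _).trans_eq (tsum_fintype _)
    _ ≤ ∑ _f : Fin (m + 1) ↪ Fin n,
          (∫⁻ y in (univ ×ˢ Icc rm rp : Set E3R), expNeg (ψ y)) *
          ENNReal.ofReal (4 * Real.pi * (2 * rp + 1) ^ 2 * (rp - rm) * ε) ^ m *
          nu ψ rm rp (n - (m + 1)) univ :=
        Finset.sum_le_sum fun f _ => setLIntegral_linkedAlong_le hψ hrm.le hε0.le hε1 f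
    _ = _ := by
        rw [Finset.sum_const, Finset.card_univ, Fintype.card_embedding_eq, Fintype.card_fin,
          Fintype.card_fin, nsmul_eq_mul, ENNReal.natCast_descFactorial hn, Nat.add_sub_cancel]
        ring

theorem statement11 (M n : ℕ) (hM : 2 ≤ M) (hn : M ≤ n) (rm rp : ℝ)
    (hrm : 0 < rm) (hrmp : rm < rp) (ε : ℝ) (hε0 : 0 < ε) (hε1 : ε ≤ 1)
    (ψ : E3R → ℝ≥0∞) (hψ : Measurable ψ) :
    nu ψ rm rp n (chainSet M n ε) ≤
      ((n.factorial : ℝ≥0∞) / ((n - M).factorial : ℝ≥0∞)) *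
        nu ψ rm rp (n - M) Set.univ *
        (∫⁻ y in (Set.univ ×ˢ Set.Icc rm rp : Set E3R), expNeg (ψ y)) *
        ENNReal.ofReal (4 * Real.pi * (2 * rp + 1) ^ 2 * (rp - rm) * ε) ^ (M - 1) :=
  statement11_general M n hM hn rm rp hrm ε hε0 hε1 ψ hψ
end
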